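/- arXiv:2203.12162 — 2 statements merged into one kernel-verified Lean document; each statement's English description precedes it below -/
import Mathlib

section
/- If w(A ⊗ B) = 2 w(A) w(B) for bounded operators A on H and B on K (with w(A), w(B) > 0), then d(A) = w(A) and d(B) = w(B), i.e., both A and B are numerical-radius orthogonal to the identity in the sense of Birkhoff–James: w(A − λI) ≥ w(A) for all λ ∈ ℂ, and similarly for B. -/
open ContinuousLinearMap

/-- Numerical radius: `w(T) = sup { |⟨Tx,x⟩| : ‖x‖ = 1 }`. -/
noncomputable def nrad {E : Type*} [NormedAddCommGroup E] [InnerProductSpace ℂ E]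
    (T : E →L[ℂ] E) : ℝ :=
  ⨆ x : {x : E // ‖x‖ = 1}, ‖(inner ℂ (T x.1) x.1 : ℂ)‖

/-- Numerical radius distance from the scalar operators: `d(T) = inf_{λ∈ℂ} w(T - λI)`. -/
noncomputable def nradDist {E : Type*} [NormedAddCommGroup E] [InnerProductSpace ℂ E]
    (T : E →L[ℂ] E) : ℝ :=
  ⨅ l : ℂ, nrad (T - l • (1 : E →L[ℂ] E))

/-- `tmul` realizes `E` as the Hilbert tensor product of `H` and `K`:
the inner product is multiplicative on elementary tensors and elementary
tensors span a dense subspace. -/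
structure IsHilbertTensorMap
    {H K E : Type*} [NormedAddCommGroup H] [InnerProductSpace ℂ H]
    [NormedAddCommGroup K] [InnerProductSpace ℂ K]
    [NormedAddCommGroup E] [InnerProductSpace ℂ E]
    (tmul : H →ₗ[ℂ] K →ₗ[ℂ] E) : Prop where
  inner_tmul : ∀ (x z : H) (y w : K),
    (inner ℂ (tmul x y) (tmul z w) : ℂ) = (inner ℂ x z : ℂ) * (inner ℂ y w : ℂ)
  dense_span :
    Dense ((Submodule.span ℂ (Set.range fun p : H × K => tmul p.1 p.2) : Submodule ℂ E) : Set E)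

/-- `T` is the tensor product operator `A ⊗ B`, i.e. `T (x ⊗ y) = A x ⊗ B y`. -/
def IsTensorOp {H K E : Type*} [NormedAddCommGroup H] [InnerProductSpace ℂ H]
    [NormedAddCommGroup K] [InnerProductSpace ℂ K]
    [NormedAddCommGroup E] [InnerProductSpace ℂ E]
    (tmul : H →ₗ[ℂ] K →ₗ[ℂ] E)
    (A : H →L[ℂ] H) (B : K →L[ℂ] K) (T : E →L[ℂ] E) : Prop :=
  ∀ (x : H) (y : K), T (tmul x y) = tmul (A x) (B y)

/-!
Choose a unit `u` with `u * μ` real and write `u • B = R + i S` with `R`, `S` self-adjoint. Then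
`S` is also the imaginary part of `u • (B - μ I)`, so `w(R) ≤ w(B)` and `w(S) ≤ w(B - μ I)`.
For self-adjoint `R` one has `w(A ⊗ R) ≤ w(A) w(R)`: on `z = ∑ x_j ⊗ f_j` with `(f_j)`
orthonormal, diagonalising the compression of `R` to `span (f_j)` rewrites `⟪(A ⊗ R) z, z⟫` as
`∑ λ_i ⟪A ξ_i, ξ_i⟫` with `∑ ‖ξ_i‖² = ‖z‖²`, and such `z` are dense. Hence
`w(A ⊗ B) ≤ w(A) (w(B) + w(B - μ I))` for every `μ`, which together with `w(A ⊗ B) = 2 w(A) w(B)`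
and `w(A) > 0` forces `w(B) ≤ w(B - μ I)`. Exchanging the two factors gives the claim for `A`.
-/

open scoped InnerProductSpace ComplexConjugate

section NumericalRadius

variable {E : Type*} [NormedAddCommGroup E] [InnerProductSpace ℂ E]

lemma nrad_nonneg (T : E →L[ℂ] E) : 0 ≤ nrad T :=
  Real.iSup_nonneg fun _ => norm_nonneg _

lemma nrad_le {T : E →L[ℂ] E} {M : ℝ} (hM : 0 ≤ M)
    (h : ∀ x : E, ‖x‖ = 1 → ‖⟪T x, x⟫_ℂ‖ ≤ M) : nrad T ≤ M :=
  Real.iSup_le (fun x => h x.1 x.2) hM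

lemma norm_inner_le_nrad (T : E →L[ℂ] E) {x : E} (hx : ‖x‖ = 1) : ‖⟪T x, x⟫_ℂ‖ ≤ nrad T := by
  refine le_ciSup (f := fun y : {y : E // ‖y‖ = 1} => ‖⟪T y.1, y.1⟫_ℂ‖) ⟨‖T‖, ?_⟩ ⟨x, hx⟩
  rintro _ ⟨y, rfl⟩
  simpa [y.2] using norm_inner_le_norm (𝕜 := ℂ) (T y.1) y.1 |>.trans
    (mul_le_mul_of_nonneg_right (T.le_opNorm y.1) (norm_nonneg _))

lemma norm_inner_le_nrad_mul_sq (T : E →L[ℂ] E) (x : E) :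
    ‖⟪T x, x⟫_ℂ‖ ≤ nrad T * ‖x‖ ^ 2 := by
  rcases eq_or_ne x 0 with rfl | hx
  · simp
  have hunit := norm_inner_le_nrad T (norm_smul_inv_norm (𝕜 := ℂ) hx)
  rw [map_smul, inner_smul_left, inner_smul_right, norm_mul, norm_mul] at hunit
  simp only [RCLike.norm_conj, norm_inv, RCLike.norm_ofReal, abs_norm] at hunit
  rw [← mul_assoc, ← sq, inv_pow, inv_mul_le_iff₀ (by positivity)] at hunit
  linarith

lemma nrad_smul_le (c : ℂ) (T : E →L[ℂ] E) : nrad (c • T) ≤ ‖c‖ * nrad T :=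
  nrad_le (by have := nrad_nonneg T; positivity) fun x hx => by
    rw [smul_apply, inner_smul_left, norm_mul, RCLike.norm_conj]
    exact mul_le_mul_of_nonneg_left (norm_inner_le_nrad T hx) (norm_nonneg c)

lemma nrad_le_of_dense {T : E →L[ℂ] E} {s : Set E} (hs : Dense s) {M : ℝ} (hM : 0 ≤ M)
    (h : ∀ z ∈ s, ‖⟪T z, z⟫_ℂ‖ ≤ M * ‖z‖ ^ 2) : nrad T ≤ M := by
  have hclosed : IsClosed {z : E | ‖⟪T z, z⟫_ℂ‖ ≤ M * ‖z‖ ^ 2} :=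
    isClosed_le (by fun_prop) (by fun_prop)
  have hall : ∀ z, ‖⟪T z, z⟫_ℂ‖ ≤ M * ‖z‖ ^ 2 := fun z =>
    closure_minimal h hclosed (hs.closure_eq.symm ▸ Set.mem_univ z)
  exact nrad_le hM fun z hz => by simpa [hz] using hall z

lemma nradDist_eq_nrad {T : E →L[ℂ] E} (h : ∀ l : ℂ, nrad T ≤ nrad (T - l • (1 : E →L[ℂ] E))) :
    nradDist T = nrad T :=
  le_antisymm (ciInf_le_of_le ⟨nrad T, by rintro _ ⟨l, rfl⟩; exact h l⟩ 0 (by simp))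
    (le_ciInf h)

variable [CompleteSpace E]

lemma inner_realPart_apply (T : E →L[ℂ] E) (x : E) :
    ⟪(realPart T : E →L[ℂ] E) x, x⟫_ℂ = (⟪T x, x⟫_ℂ).re := by
  rw [realPart_apply_coe, star_eq_adjoint, ← Complex.coe_smul, smul_apply, add_apply,
    inner_smul_left, inner_add_left, adjoint_inner_left, ← inner_conj_symm x, Complex.add_conj,
    Complex.conj_ofReal]
  push_cast
  ring

lemma inner_imaginaryPart_apply (T : E →L[ℂ] E) (x : E) :
    ⟪(imaginaryPart T : E →L[ℂ] E) x, x⟫_ℂ = -(⟪T x, x⟫_ℂ).im := by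
  rw [imaginaryPart_apply_coe, star_eq_adjoint, ← Complex.coe_smul, smul_apply, smul_apply,
    sub_apply, inner_smul_left, inner_smul_left, inner_sub_left, adjoint_inner_left,
    ← inner_conj_symm x, Complex.sub_conj]
  simp only [map_neg, Complex.conj_I, Complex.conj_ofReal]
  push_cast
  linear_combination (⟪T x, x⟫_ℂ).im * Complex.I_sq

lemma nrad_realPart_le (T : E →L[ℂ] E) : nrad (realPart T : E →L[ℂ] E) ≤ nrad T :=
  nrad_le (nrad_nonneg T) fun x hx => by
    rw [inner_realPart_apply, Complex.norm_real, Real.norm_eq_abs]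
    exact (Complex.abs_re_le_norm _).trans (norm_inner_le_nrad T hx)

lemma nrad_imaginaryPart_le (T : E →L[ℂ] E) : nrad (imaginaryPart T : E →L[ℂ] E) ≤ nrad T :=
  nrad_le (nrad_nonneg T) fun x hx => by
    rw [inner_imaginaryPart_apply, norm_neg, Complex.norm_real, Real.norm_eq_abs]
    exact (Complex.abs_im_le_norm _).trans (norm_inner_le_nrad T hx)

end NumericalRadius

section TensorForm

variable {H K : Type*} [NormedAddCommGroup H] [InnerProductSpace ℂ H]
  [NormedAddCommGroup K] [InnerProductSpace ℂ K] {ι : Type*} [Fintype ι]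

/-- `⟪(A ⊗ B) z, z⟫` for `z = ∑ j, x j ⊗ f j`. -/
noncomputable def tensorForm (A : H →L[ℂ] H) (x : ι → H) (B : K →L[ℂ] K) (f : ι → K) : ℂ :=
  ∑ j, ∑ k, ⟪A (x j), x k⟫_ℂ * ⟪B (f j), f k⟫_ℂ

lemma tensorForm_add (A : H →L[ℂ] H) (x : ι → H) (B₁ B₂ : K →L[ℂ] K) (f : ι → K) :
    tensorForm A x (B₁ + B₂) f = tensorForm A x B₁ f + tensorForm A x B₂ f := by
  simp only [tensorForm, add_apply, inner_add_left, mul_add, Finset.sum_add_distrib]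

lemma tensorForm_smul (A : H →L[ℂ] H) (x : ι → H) (c : ℂ) (B : K →L[ℂ] K) (f : ι → K) :
    tensorForm A x (c • B) f = conj c * tensorForm A x B f := by
  simp only [tensorForm, smul_apply, inner_smul_left, Finset.mul_sum]
  exact Finset.sum_congr rfl fun _ _ => Finset.sum_congr rfl fun _ _ => by ring

lemma inner_sum_smul_sum_smul (A : H →L[ℂ] H) (t : ι → ℂ) (x : ι → H) :
    ⟪A (∑ j, t j • x j), ∑ k, t k • x k⟫_ℂ = ∑ j, ∑ k, conj (t j) * t k * ⟪A (x j), x k⟫_ℂ := by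
  simp only [map_sum, map_smul, sum_inner, inner_smul_left, inner_sum, inner_smul_right,
    Finset.mul_sum, mul_assoc]
  rw [Finset.sum_comm]
  exact Finset.sum_congr rfl fun _ _ => Finset.sum_congr rfl fun _ _ => mul_left_comm _ _ _

lemma sum_mul_inner_sum_smul {κ : Type*} [Fintype κ] (A : H →L[ℂ] H) (c : κ → ℂ)
    (t : κ → ι → ℂ) (x : ι → H) :
    ∑ i, c i * ⟪A (∑ j, t i j • x j), ∑ k, t i k • x k⟫_ℂ
      = ∑ j, ∑ k, ⟪A (x j), x k⟫_ℂ * ∑ i, c i * (conj (t i j) * t i k) := by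
  simp only [inner_sum_smul_sum_smul, Finset.mul_sum]
  rw [Finset.sum_comm]
  refine Finset.sum_congr rfl fun j _ => ?_
  rw [Finset.sum_comm]
  exact Finset.sum_congr rfl fun k _ => Finset.sum_congr rfl fun i _ => by ring

end TensorForm

section SelfAdjoint

variable {H : Type*} [NormedAddCommGroup H] [InnerProductSpace ℂ H] {ι : Type*} [Fintype ι]

lemma norm_tensorForm_le_of_isSymmetric {V : Type*} [NormedAddCommGroup V]
    [InnerProductSpace ℂ V] [FiniteDimensional ℂ V] (A : H →L[ℂ] H) (x : ι → H)
    {R : V →L[ℂ] V} (hR : (R : V →ₗ[ℂ] V).IsSymmetric) (b : OrthonormalBasis ι ℂ V) :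
    ‖tensorForm A x R b‖ ≤ nrad A * nrad R * ∑ j, ‖x j‖ ^ 2 := by
  classical
  set v := hR.eigenvectorBasis rfl
  set ev := hR.eigenvalues rfl
  have hv : ∀ i, R (v i) = (ev i : ℂ) • v i := hR.apply_eigenvectorBasis rfl
  set t : Fin _ → ι → ℂ := fun i j => ⟪v i, b j⟫_ℂ
  set ξ := fun i => ∑ j, t i j • x j
  have hentry : ∀ j k, ⟪R (b j), b k⟫_ℂ = ∑ i, (ev i : ℂ) * (conj (t i j) * t i k) := by
    intro j k
    rw [← v.sum_inner_mul_inner]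
    refine Finset.sum_congr rfl fun i _ => ?_
    rw [← coe_coe, hR, coe_coe, hv, inner_smul_right, inner_conj_symm, mul_assoc]
  have hform : tensorForm A x R b = ∑ i, (ev i : ℂ) * ⟪A (ξ i), ξ i⟫_ℂ := by
    simp only [ξ, sum_mul_inner_sum_smul, tensorForm, hentry]
  have hparseval : ∑ i, ‖ξ i‖ ^ 2 = ∑ j, ‖x j‖ ^ 2 := by
    have h := sum_mul_inner_sum_smul (ContinuousLinearMap.id ℂ H) 1 t x
    have hb : ∀ j k, ∑ i, conj (t i j) * t i k = if j = k then 1 else 0 := fun j k => by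
      simp only [t, inner_conj_symm, v.sum_inner_mul_inner, orthonormal_iff_ite.mp b.orthonormal]
    simp only [id_apply, Pi.one_apply, one_mul, hb, mul_ite, mul_one, mul_zero, Finset.sum_ite_eq,
      Finset.mem_univ, if_true, inner_self_eq_norm_sq_to_K] at h
    exact_mod_cast h
  have hev : ∀ i, ‖(ev i : ℂ)‖ ≤ nrad R := fun i => by
    simpa [hv, inner_smul_left, v.orthonormal.1 i] using
      norm_inner_le_nrad R (v.orthonormal.1 i)
  calc ‖tensorForm A x R b‖ = ‖∑ i, (ev i : ℂ) * ⟪A (ξ i), ξ i⟫_ℂ‖ := by rw [hform]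
    _ ≤ ∑ i, nrad R * (nrad A * ‖ξ i‖ ^ 2) := norm_sum_le_of_le _ fun i _ => by
        rw [norm_mul]
        exact mul_le_mul (hev i) (norm_inner_le_nrad_mul_sq A _) (norm_nonneg _) (nrad_nonneg R)
    _ = nrad A * nrad R * ∑ j, ‖x j‖ ^ 2 := by
        rw [← hparseval, Finset.mul_sum]
        exact Finset.sum_congr rfl fun _ _ => by ring

end SelfAdjoint

lemma Orthonormal.exists_linearIsometry_euclideanSpace {K ι : Type*} [NormedAddCommGroup K]
    [InnerProductSpace ℂ K] [Fintype ι] {f : ι → K} (hf : Orthonormal ℂ f) :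
    ∃ J : EuclideanSpace ℂ ι →ₗᵢ[ℂ] K, ∀ j, J (EuclideanSpace.basisFun ι ℂ j) = f j := by
  classical
  set e := (EuclideanSpace.basisFun ι ℂ).toBasis
  have hJf : e.constr ℂ f ∘ e = f := funext fun j => e.constr_basis ℂ f j
  refine ⟨(e.constr ℂ f).isometryOfOrthonormal ?_ (hJf ▸ hf), fun j => congrFun hJf j⟩
  simp [e]

section Compression

variable {H K : Type*} [NormedAddCommGroup H] [InnerProductSpace ℂ H]
  [NormedAddCommGroup K] [InnerProductSpace ℂ K] [CompleteSpace K] {ι : Type*} [Fintype ι]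

lemma nrad_adjoint_comp_comp_le {V : Type*} [NormedAddCommGroup V] [InnerProductSpace ℂ V]
    [CompleteSpace V] (R : K →L[ℂ] K) (J : V →ₗᵢ[ℂ] K) :
    nrad (adjoint J.toContinuousLinearMap ∘L R ∘L J.toContinuousLinearMap) ≤ nrad R :=
  nrad_le (nrad_nonneg R) fun v hv => by
    rw [comp_apply, comp_apply, adjoint_inner_left]
    exact norm_inner_le_nrad R (by simpa using hv)

lemma norm_tensorForm_le_of_isSelfAdjoint (A : H →L[ℂ] H) (x : ι → H) {R : K →L[ℂ] K}
    (hR : IsSelfAdjoint R) {f : ι → K} (hf : Orthonormal ℂ f) :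
    ‖tensorForm A x R f‖ ≤ nrad A * nrad R * ∑ j, ‖x j‖ ^ 2 := by
  obtain ⟨J, hJ⟩ := hf.exists_linearIsometry_euclideanSpace
  set e := EuclideanSpace.basisFun ι ℂ
  set R' := adjoint J.toContinuousLinearMap ∘L R ∘L J.toContinuousLinearMap
  have hform : tensorForm A x R f = tensorForm A x R' e := by
    simp only [tensorForm, R', comp_apply, adjoint_inner_left,
      LinearIsometry.coe_toContinuousLinearMap, hJ]
  rw [hform]
  calc ‖tensorForm A x R' e‖ ≤ nrad A * nrad R' * ∑ j, ‖x j‖ ^ 2 :=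
        norm_tensorForm_le_of_isSymmetric A x (hR.adjoint_conj _).isSymmetric e
    _ ≤ nrad A * nrad R * ∑ j, ‖x j‖ ^ 2 := by
        gcongr
        · exact nrad_nonneg A
        · exact nrad_adjoint_comp_comp_le R J

lemma exists_norm_eq_one_mul_eq_norm (μ : ℂ) : ∃ u : ℂ, ‖u‖ = 1 ∧ u * μ = ‖μ‖ := by
  refine ⟨Complex.exp (↑(-μ.arg) * Complex.I), Complex.norm_exp_ofReal_mul_I _, ?_⟩
  conv_lhs => rw [← Complex.norm_mul_exp_arg_mul_I μ]
  rw [mul_left_comm, ← Complex.exp_add]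
  push_cast
  simp

lemma imaginaryPart_smul_sub_smul_one {u μ : ℂ} {r : ℝ} (h : u * μ = r) (B : K →L[ℂ] K) :
    imaginaryPart (u • (B - μ • (1 : K →L[ℂ] K))) = imaginaryPart (u • B) := by
  have hreal : IsSelfAdjoint ((r : ℂ) • (1 : K →L[ℂ] K)) :=
    IsSelfAdjoint.smul (Complex.conj_ofReal r) (IsSelfAdjoint.one _)
  rw [smul_sub, smul_smul, h, map_sub, imaginaryPart_eq_zero_iff.2 hreal, sub_zero]

lemma norm_tensorForm_le (A : H →L[ℂ] H) (x : ι → H) (B : K →L[ℂ] K) {f : ι → K}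
    (hf : Orthonormal ℂ f) (μ : ℂ) :
    ‖tensorForm A x B f‖
      ≤ nrad A * (nrad B + nrad (B - μ • (1 : K →L[ℂ] K))) * ∑ j, ‖x j‖ ^ 2 := by
  obtain ⟨u, hu, huμ⟩ := exists_norm_eq_one_mul_eq_norm μ
  have hsmul (S : K →L[ℂ] K) : nrad (u • S) ≤ nrad S := by
    simpa [hu] using nrad_smul_le u S
  have hre : nrad (realPart (u • B) : K →L[ℂ] K) ≤ nrad B :=
    (nrad_realPart_le _).trans (hsmul B)
  have him : nrad (imaginaryPart (u • B) : K →L[ℂ] K) ≤ nrad (B - μ • (1 : K →L[ℂ] K)) := by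
    rw [← imaginaryPart_smul_sub_smul_one huμ]
    exact (nrad_imaginaryPart_le _).trans (hsmul _)
  have hsplit : conj u * tensorForm A x B f = tensorForm A x (realPart (u • B)) f
      + conj Complex.I * tensorForm A x (imaginaryPart (u • B)) f := by
    rw [← tensorForm_smul, ← tensorForm_smul, ← tensorForm_add,
      realPart_add_I_smul_imaginaryPart]
  calc ‖tensorForm A x B f‖ = ‖conj u * tensorForm A x B f‖ := by
        rw [norm_mul, RCLike.norm_conj, hu, one_mul]
    _ ≤ ‖tensorForm A x (realPart (u • B)) f‖ + ‖tensorForm A x (imaginaryPart (u • B)) f‖ := by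
        rw [hsplit]
        refine (norm_add_le _ _).trans_eq ?_
        rw [norm_mul, RCLike.norm_conj, Complex.norm_I, one_mul]
    _ ≤ nrad A * nrad (realPart (u • B) : K →L[ℂ] K) * ∑ j, ‖x j‖ ^ 2
          + nrad A * nrad (imaginaryPart (u • B) : K →L[ℂ] K) * ∑ j, ‖x j‖ ^ 2 :=
        add_le_add (norm_tensorForm_le_of_isSelfAdjoint A x (realPart (u • B)).2 hf)
          (norm_tensorForm_le_of_isSelfAdjoint A x (imaginaryPart (u • B)).2 hf)
    _ ≤ nrad A * (nrad B + nrad (B - μ • (1 : K →L[ℂ] K))) * ∑ j, ‖x j‖ ^ 2 := by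
        rw [← add_mul, ← mul_add]
        gcongr
        exact nrad_nonneg A

end Compression

section HilbertTensor

variable {H K E : Type*} [NormedAddCommGroup H] [InnerProductSpace ℂ H]
  [NormedAddCommGroup K] [InnerProductSpace ℂ K] [NormedAddCommGroup E] [InnerProductSpace ℂ E]
  {tmul : H →ₗ[ℂ] K →ₗ[ℂ] E}

lemma exists_orthonormal_eq_sum_tmul {z : E}
    (hz : z ∈ Submodule.span ℂ (Set.range fun p : H × K => tmul p.1 p.2)) :
    ∃ (m : ℕ) (x : Fin m → H) (f : Fin m → K), Orthonormal ℂ f ∧ z = ∑ j, tmul (x j) (f j) := by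
  obtain ⟨n, c, g, rfl⟩ := Submodule.mem_span_set'.mp hz
  choose p hp using fun i => (g i).2
  simp only at hp
  set F := Submodule.span ℂ (Set.range fun i => (p i).2)
  have : FiniteDimensional ℂ F := FiniteDimensional.span_of_finite ℂ (Set.finite_range _)
  set b := stdOrthonormalBasis ℂ F
  have hrepr (i : Fin n) : (p i).2 = ∑ j, ⟪(b j : K), (p i).2⟫_ℂ • (b j : K) := by
    have hmem : (p i).2 ∈ F := Submodule.subset_span ⟨i, rfl⟩
    simpa using (congrArg Subtype.val (b.sum_repr' ⟨(p i).2, hmem⟩)).symm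
  refine ⟨_, fun j => ∑ i, (c i * ⟪(b j : K), (p i).2⟫_ℂ) • (p i).1, fun j => b j,
    b.orthonormal.comp_linearIsometry F.subtypeₗᵢ, ?_⟩
  calc ∑ i, c i • (g i : E)
      = ∑ i, c i • tmul (p i).1 (∑ j, ⟪(b j : K), (p i).2⟫_ℂ • (b j : K)) :=
        Finset.sum_congr rfl fun i _ => by rw [← hrepr i, ← hp i]
    _ = ∑ j, tmul (∑ i, (c i * ⟪(b j : K), (p i).2⟫_ℂ) • (p i).1) (b j) := by
        simp only [map_sum, map_smul, LinearMap.sum_apply, LinearMap.smul_apply, Finset.smul_sum,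
          smul_smul]
        exact Finset.sum_comm

lemma IsHilbertTensorMap.inner_sum_tmul (htmul : IsHilbertTensorMap tmul) {ι : Type*}
    [Fintype ι] (x y : ι → H) (f g : ι → K) :
    ⟪∑ j, tmul (x j) (f j), ∑ k, tmul (y k) (g k)⟫_ℂ = ∑ j, ∑ k, ⟪x j, y k⟫_ℂ * ⟪f j, g k⟫_ℂ := by
  rw [sum_inner]
  simp only [inner_sum, htmul.inner_tmul]

lemma IsHilbertTensorMap.norm_sum_tmul_sq (htmul : IsHilbertTensorMap tmul) {ι : Type*}
    [Fintype ι] (x : ι → H) {f : ι → K} (hf : Orthonormal ℂ f) :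
    ‖∑ j, tmul (x j) (f j)‖ ^ 2 = ∑ j, ‖x j‖ ^ 2 := by
  classical
  have h := htmul.inner_sum_tmul x x f f
  simp only [orthonormal_iff_ite.mp hf, mul_ite, mul_one, mul_zero, Finset.sum_ite_eq,
    Finset.mem_univ, if_true, inner_self_eq_norm_sq_to_K] at h
  exact_mod_cast h

lemma IsTensorOp.inner_map_sum_tmul (htmul : IsHilbertTensorMap tmul) {A : H →L[ℂ] H}
    {B : K →L[ℂ] K} {T : E →L[ℂ] E} (hT : IsTensorOp tmul A B T) {ι : Type*} [Fintype ι]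
    (x : ι → H) (f : ι → K) :
    ⟪T (∑ j, tmul (x j) (f j)), ∑ k, tmul (x k) (f k)⟫_ℂ = tensorForm A x B f := by
  rw [map_sum]
  simp only [hT _ _]
  exact htmul.inner_sum_tmul (fun j => A (x j)) x (fun j => B (f j)) f

lemma IsHilbertTensorMap.flip (htmul : IsHilbertTensorMap tmul) :
    IsHilbertTensorMap tmul.flip where
  inner_tmul y w x z := by
    rw [LinearMap.flip_apply, LinearMap.flip_apply, htmul.inner_tmul, mul_comm]
  dense_span := by
    convert htmul.dense_span using 4
    exact (Equiv.prodComm K H).surjective.range_comp (fun p : H × K => tmul p.1 p.2)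

lemma IsTensorOp.flip {A : H →L[ℂ] H} {B : K →L[ℂ] K} {T : E →L[ℂ] E}
    (hT : IsTensorOp tmul A B T) : IsTensorOp tmul.flip B A T :=
  fun y x => hT x y

end HilbertTensor

section TensorProduct

variable {H K E : Type*} [NormedAddCommGroup H] [InnerProductSpace ℂ H]
  [NormedAddCommGroup K] [InnerProductSpace ℂ K] [CompleteSpace K]
  [NormedAddCommGroup E] [InnerProductSpace ℂ E]
  {tmul : H →ₗ[ℂ] K →ₗ[ℂ] E} {A : H →L[ℂ] H} {B : K →L[ℂ] K} {T : E →L[ℂ] E}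

lemma IsTensorOp.nrad_le_mul_add (htmul : IsHilbertTensorMap tmul) (hT : IsTensorOp tmul A B T)
    (μ : ℂ) :
    nrad T ≤ nrad A * (nrad B + nrad (B - μ • (1 : K →L[ℂ] K))) := by
  refine nrad_le_of_dense htmul.dense_span
    (mul_nonneg (nrad_nonneg A) (add_nonneg (nrad_nonneg B) (nrad_nonneg _))) fun z hz => ?_
  obtain ⟨m, x, f, hf, rfl⟩ := exists_orthonormal_eq_sum_tmul hz
  rw [hT.inner_map_sum_tmul htmul, htmul.norm_sum_tmul_sq x hf]
  exact norm_tensorForm_le A x B hf μ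

lemma IsTensorOp.nrad_le_nrad_sub_smul_one (htmul : IsHilbertTensorMap tmul)
    (hT : IsTensorOp tmul A B T) (hwA : 0 < nrad A) (heq : nrad T = 2 * (nrad A * nrad B))
    (μ : ℂ) : nrad B ≤ nrad (B - μ • (1 : K →L[ℂ] K)) := by
  have h := hT.nrad_le_mul_add htmul μ
  rw [heq] at h
  nlinarith

end TensorProduct

theorem stmt2_general
    {H K E : Type*} [NormedAddCommGroup H] [InnerProductSpace ℂ H] [CompleteSpace H]
    [NormedAddCommGroup K] [InnerProductSpace ℂ K] [CompleteSpace K]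
    [NormedAddCommGroup E] [InnerProductSpace ℂ E]
    (tmul : H →ₗ[ℂ] K →ₗ[ℂ] E) (htmul : IsHilbertTensorMap tmul)
    (A : H →L[ℂ] H) (B : K →L[ℂ] K) (T : E →L[ℂ] E)
    (hT : IsTensorOp tmul A B T)
    (hwA : 0 < nrad A) (hwB : 0 < nrad B)
    (heq : nrad T = 2 * (nrad A * nrad B)) :
    nradDist A = nrad A ∧ nradDist B = nrad B ∧
      (∀ l : ℂ, nrad A ≤ nrad (A - l • (1 : H →L[ℂ] H))) ∧
      (∀ l : ℂ, nrad B ≤ nrad (B - l • (1 : K →L[ℂ] K))) := by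
  have hB := hT.nrad_le_nrad_sub_smul_one htmul hwA heq
  have hA := hT.flip.nrad_le_nrad_sub_smul_one htmul.flip hwB (by rw [heq, mul_comm (nrad A)])
  exact ⟨nradDist_eq_nrad hA, nradDist_eq_nrad hB, hA, hB⟩

theorem stmt2
    {H K E : Type*} [NormedAddCommGroup H] [InnerProductSpace ℂ H] [CompleteSpace H]
    [NormedAddCommGroup K] [InnerProductSpace ℂ K] [CompleteSpace K]
    [NormedAddCommGroup E] [InnerProductSpace ℂ E] [CompleteSpace E]
    (tmul : H →ₗ[ℂ] K →ₗ[ℂ] E) (htmul : IsHilbertTensorMap tmul)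
    (A : H →L[ℂ] H) (B : K →L[ℂ] K) (T : E →L[ℂ] E)
    (hT : IsTensorOp tmul A B T)
    (hwA : 0 < nrad A) (hwB : 0 < nrad B)
    (heq : nrad T = 2 * (nrad A * nrad B)) :
    nradDist A = nrad A ∧ nradDist B = nrad B ∧
      (∀ l : ℂ, nrad A ≤ nrad (A - l • (1 : H →L[ℂ] H))) ∧
      (∀ l : ℂ, nrad B ≤ nrad (B - l • (1 : K →L[ℂ] K))) :=
  stmt2_general tmul htmul A B T hT hwA hwB heq
end

section
/- For positive bounded linear operators A and B on a complex Hilbert space, ‖A + B‖ ≤ max{‖A‖, ‖B‖} + ‖A^{1/2} B^{1/2}‖. -/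
/-!
Write `S = A^{1/2}`, `T = B^{1/2}` and let `X = [S T] : H ⊕₂ H → H` be the row operator. Then
`X X* = A + B`, so `‖A + B‖ = ‖X‖²` by the C*-identity. Expanding
`‖S x + T y‖² = ‖S x‖² + ‖T y‖² + 2 Re ⟪x, S* T y⟫` and bounding the cross term by
`‖S* T‖ (‖x‖² + ‖y‖²)` gives `‖X‖² ≤ max ‖S‖² ‖T‖² + ‖S* T‖`, and `‖S‖² = ‖A‖`, `‖T‖² = ‖B‖`.
-/

open ContinuousLinearMap RCLike

namespace ContinuousLinearMap

variable {𝕜 E F G : Type*} [RCLike 𝕜]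
  [NormedAddCommGroup E] [InnerProductSpace 𝕜 E]
  [NormedAddCommGroup F] [InnerProductSpace 𝕜 F]
  [NormedAddCommGroup G] [InnerProductSpace 𝕜 G]

theorem norm_comp_adjoint_self [CompleteSpace E] [CompleteSpace F] (A : E →L[𝕜] F) :
    ‖A ∘L adjoint A‖ = ‖A‖ * ‖A‖ := by
  simpa only [adjoint_adjoint, LinearIsometryEquiv.norm_map] using
    norm_adjoint_comp_self (adjoint A)

theorem sq_norm_apply_le_of_sq_norm_le (S : E →L[𝕜] F) (x : E) {m : ℝ} (hm : ‖S‖ ^ 2 ≤ m) :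
    ‖S x‖ ^ 2 ≤ m * ‖x‖ ^ 2 := calc
  ‖S x‖ ^ 2 ≤ (‖S‖ * ‖x‖) ^ 2 := by gcongr; exact le_opNorm S x
  _ ≤ m * ‖x‖ ^ 2 := by rw [mul_pow]; gcongr

noncomputable def coprodL2 (S : E →L[𝕜] G) (T : F →L[𝕜] G) : WithLp 2 (E × F) →L[𝕜] G :=
  S.coprod T ∘L (WithLp.prodContinuousLinearEquiv 2 𝕜 E F).toContinuousLinearMap

variable (S : E →L[𝕜] G) (T : F →L[𝕜] G)

@[simp]
theorem coprodL2_apply (w : WithLp 2 (E × F)) : coprodL2 S T w = S w.fst + T w.snd := rfl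

variable [CompleteSpace E] [CompleteSpace G]

theorem two_mul_re_inner_apply_le (x : E) (y : F) :
    2 * re (inner 𝕜 (S x) (T y)) ≤ ‖adjoint S ∘L T‖ * (‖x‖ ^ 2 + ‖y‖ ^ 2) := by
  have h : re (inner 𝕜 (S x) (T y)) ≤ ‖adjoint S ∘L T‖ * (‖x‖ * ‖y‖) := calc
    re (inner 𝕜 (S x) (T y)) ≤ ‖inner 𝕜 x ((adjoint S ∘L T) y)‖ := by
      rw [comp_apply, adjoint_inner_right]; exact re_le_norm _
    _ ≤ ‖x‖ * (‖adjoint S ∘L T‖ * ‖y‖) :=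
      (norm_inner_le_norm _ _).trans (by gcongr; exact le_opNorm _ _)
    _ = _ := by ring
  nlinarith [two_mul_le_add_sq ‖x‖ ‖y‖, norm_nonneg (adjoint S ∘L T)]

theorem sq_norm_coprodL2_le :
    ‖coprodL2 S T‖ ^ 2 ≤ max (‖S‖ ^ 2) (‖T‖ ^ 2) + ‖adjoint S ∘L T‖ := by
  set c := max (‖S‖ ^ 2) (‖T‖ ^ 2) + ‖adjoint S ∘L T‖
  have hc : 0 ≤ c := by positivity
  suffices h : ‖coprodL2 S T‖ ≤ √c by
    simpa [Real.sq_sqrt hc] using pow_le_pow_left₀ (norm_nonneg _) h 2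
  refine opNorm_le_bound _ (Real.sqrt_nonneg c) fun w ↦ ?_
  rw [← Real.sqrt_sq (norm_nonneg (coprodL2 S T w)), ← Real.sqrt_sq (norm_nonneg w),
    ← Real.sqrt_mul hc]
  refine Real.sqrt_le_sqrt ?_
  rw [coprodL2_apply, norm_add_sq (𝕜 := 𝕜), WithLp.prod_norm_sq_eq_of_L2]
  have hx := sq_norm_apply_le_of_sq_norm_le S w.fst (le_max_left _ (‖T‖ ^ 2))
  have hy := sq_norm_apply_le_of_sq_norm_le T w.snd (le_max_right (‖S‖ ^ 2) _)
  have hxy := two_mul_re_inner_apply_le S T w.fst w.snd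
  linarith

variable [CompleteSpace F]

@[simp]
theorem adjoint_coprodL2_apply (z : G) :
    adjoint (coprodL2 S T) z = WithLp.toLp 2 (adjoint S z, adjoint T z) := by
  suffices h : (WithLp.prodContinuousLinearEquiv 2 𝕜 E F).symm.toContinuousLinearMap ∘L
      ((adjoint S).prod (adjoint T)) = adjoint (coprodL2 S T) from (congr($h z)).symm
  rw [eq_adjoint_iff]
  intro z w
  simp [WithLp.prod_inner_apply, inner_add_right, adjoint_inner_left]

theorem coprodL2_comp_adjoint :
    coprodL2 S T ∘L adjoint (coprodL2 S T) = S ∘L adjoint S + T ∘L adjoint T := by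
  ext z
  simp

theorem norm_comp_adjoint_add_comp_adjoint_le :
    ‖S ∘L adjoint S + T ∘L adjoint T‖ ≤ max (‖S‖ ^ 2) (‖T‖ ^ 2) + ‖adjoint S ∘L T‖ := by
  rw [← coprodL2_comp_adjoint, norm_comp_adjoint_self, ← sq]
  exact sq_norm_coprodL2_le S T

end ContinuousLinearMap

set_option synthInstance.maxHeartbeats 400000 in

theorem stmt18
    {H : Type*} [NormedAddCommGroup H] [InnerProductSpace ℂ H] [CompleteSpace H]
    (A B : H →L[ℂ] H) (hA : 0 ≤ A) (hB : 0 ≤ B) :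
    ‖A + B‖ ≤ max ‖A‖ ‖B‖ + ‖CFC.sqrt A * CFC.sqrt B‖ := by
  have hS : adjoint (CFC.sqrt A) = CFC.sqrt A := (CFC.sqrt_nonneg A).isSelfAdjoint
  have hT : adjoint (CFC.sqrt B) = CFC.sqrt B := (CFC.sqrt_nonneg B).isSelfAdjoint
  have key := norm_comp_adjoint_add_comp_adjoint_le (CFC.sqrt A) (CFC.sqrt B)
  rw [hS, hT, CFC.norm_sqrt A, CFC.norm_sqrt B, Real.sq_sqrt (norm_nonneg _),
    Real.sq_sqrt (norm_nonneg _)] at key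
  rwa [← mul_def, ← mul_def, CFC.sqrt_mul_sqrt_self A, CFC.sqrt_mul_sqrt_self B] at key
end
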